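/- Harmony is unbiased: let d ≥ 1, ε > 0, and x ∈ [−1,1]^d. The Harmony mechanism samples a coordinate index j uniformly at random from {1,…,d}, applies Duchi's mechanism with parameter ε to x_j obtaining a value in {±(e^ε+1)/(e^ε−1)}, multiplies it by d, and outputs the random vector Y ∈ ℝ^d whose j-th coordinate equals this scaled value and whose other coordinates are 0. Then E[Y_i] = x_i for every coordinate i ∈ {1,…,d}. -/
import Mathlib


open MeasureTheory

/-- Duchi's mechanism on inputs `x ∈ [−1,1]` with privacy parameter `ε`: it outputs
`(e^ε + 1)/(e^ε − 1)` with probability `1/2 + x·(e^ε − 1)/(2e^ε + 2)` and outputs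
`−(e^ε + 1)/(e^ε − 1)` with the complementary probability. -/
noncomputable def duchiMechanism (ε x : ℝ) : Measure ℝ :=
  ENNReal.ofReal (1 / 2 + x * (Real.exp ε - 1) / (2 * Real.exp ε + 2)) •
      Measure.dirac ((Real.exp ε + 1) / (Real.exp ε - 1)) +
    ENNReal.ofReal (1 / 2 - x * (Real.exp ε - 1) / (2 * Real.exp ε + 2)) •
      Measure.dirac (-((Real.exp ε + 1) / (Real.exp ε - 1)))

/-- The Harmony mechanism on inputs `x ∈ [−1,1]^d`: it samples a coordinate `j`
uniformly at random from `{1,…,d}` (independently of the randomness of Duchi's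
mechanism), applies Duchi's mechanism with parameter `ε` to `x_j`, multiplies the result
by `d`, and outputs the vector whose `j`-th coordinate is this scaled value and whose
other coordinates are `0`. -/
noncomputable def harmonyMechanism (d : ℕ) (ε : ℝ) (x : Fin d → ℝ) :
    Measure (Fin d → ℝ) :=
  Measure.sum fun j : Fin d =>
    (d : ENNReal)⁻¹ •
      (duchiMechanism ε (x j)).map fun s => Function.update (0 : Fin d → ℝ) j (d * s)

lemma integrable_smul_dirac (h : ℝ → ℝ) (hh : Measurable h) (p : ENNReal) (hp : p ≠ ⊤)
    (a : ℝ) : Integrable h (p • Measure.dirac a) := by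
  refine ⟨hh.aestronglyMeasurable, ?_⟩
  rw [HasFiniteIntegral, lintegral_smul_measure, lintegral_dirac]
  exact ENNReal.mul_lt_top hp.lt_top ENNReal.coe_lt_top

lemma integrable_duchi (ε x : ℝ) (h : ℝ → ℝ) (hh : Measurable h) :
    Integrable h (duchiMechanism ε x) :=
  Integrable.add_measure
    (integrable_smul_dirac h hh _ ENNReal.ofReal_ne_top _)
    (integrable_smul_dirac h hh _ ENNReal.ofReal_ne_top _)

lemma integral_smul_dirac (h : ℝ → ℝ) (hh : Measurable h) (p : ENNReal) (a : ℝ) :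
    ∫ s, h s ∂(p • Measure.dirac a) = p.toReal * h a := by
  rw [integral_smul_measure, integral_dirac' _ _ hh.stronglyMeasurable, smul_eq_mul]

lemma exp_one_lt (ε : ℝ) (hε : 0 < ε) : (1 : ℝ) < Real.exp ε := by
  calc (1:ℝ) = Real.exp 0 := (Real.exp_zero).symm
  _ < Real.exp ε := Real.exp_lt_exp.mpr hε

lemma integral_duchi (ε x : ℝ) (hx : x ∈ Set.Icc (-1 : ℝ) 1) (hε : 0 < ε)
    (h : ℝ → ℝ) (hh : Measurable h) :
    ∫ s, h s ∂(duchiMechanism ε x) =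
      (1 / 2 + x * (Real.exp ε - 1) / (2 * Real.exp ε + 2)) *
        h ((Real.exp ε + 1) / (Real.exp ε - 1)) +
      (1 / 2 - x * (Real.exp ε - 1) / (2 * Real.exp ε + 2)) *
        h (-((Real.exp ε + 1) / (Real.exp ε - 1))) := by
  have he := exp_one_lt ε hε
  obtain ⟨hx1, hx2⟩ := hx
  have hr0 : (0 : ℝ) ≤ (Real.exp ε - 1) / (2 * Real.exp ε + 2) := by
    apply div_nonneg <;> nlinarith
  have hr : (Real.exp ε - 1) / (2 * Real.exp ε + 2) ≤ 1 / 2 := by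
    rw [div_le_div_iff₀ (by nlinarith) (by norm_num)]; nlinarith
  have hxr : |x * ((Real.exp ε - 1) / (2 * Real.exp ε + 2))| ≤ 1 / 2 := by
    rw [abs_mul, abs_of_nonneg hr0]
    calc |x| * ((Real.exp ε - 1) / (2 * Real.exp ε + 2))
        ≤ 1 * (1/2) := mul_le_mul (abs_le.mpr ⟨hx1, hx2⟩) hr hr0 (by norm_num)
      _ = 1/2 := by norm_num
  rw [abs_le] at hxr
  have hp : (0:ℝ) ≤ 1 / 2 + x * (Real.exp ε - 1) / (2 * Real.exp ε + 2) := by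
    rw [mul_div_assoc]; linarith [hxr.1]
  have hq : (0:ℝ) ≤ 1 / 2 - x * (Real.exp ε - 1) / (2 * Real.exp ε + 2) := by
    rw [mul_div_assoc]; linarith [hxr.2]
  rw [duchiMechanism, integral_add_measure
    (integrable_smul_dirac h hh _ ENNReal.ofReal_ne_top _)
    (integrable_smul_dirac h hh _ ENNReal.ofReal_ne_top _),
    integral_smul_dirac h hh, integral_smul_dirac h hh,
    ENNReal.toReal_ofReal hp, ENNReal.toReal_ofReal hq]

/-- Harmony is unbiased: for `d ≥ 1`, `ε > 0` and `x ∈ [−1,1]^d`, the output vector `Y`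
of the Harmony mechanism satisfies `E[Y_i] = x_i` for every coordinate `i`. -/
theorem harmony_unbiased (d : ℕ) (hd : 1 ≤ d) (ε : ℝ) (hε : 0 < ε)
    (x : Fin d → ℝ) (hx : ∀ j, x j ∈ Set.Icc (-1 : ℝ) 1) :
    ∀ i : Fin d, (∫ y, y i ∂(harmonyMechanism d ε x)) = x i := by
  intro i
  have he := exp_one_lt ε hε
  have hFmeas : ∀ j : Fin d,
      Measurable (fun s : ℝ => Function.update (0 : Fin d → ℝ) j (d * s)) := fun j =>
    (measurable_update (0 : Fin d → ℝ) (a := j)).comp (measurable_const_mul _)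
  have hgmeas : ∀ j : Fin d,
      Measurable (fun s : ℝ => Function.update (0 : Fin d → ℝ) j (d * s) i) := fun j =>
    (measurable_pi_apply i).comp (hFmeas j)
  have hint : ∀ j : Fin d,
      Integrable (fun y : Fin d → ℝ => y i)
        ((d : ENNReal)⁻¹ •
          (duchiMechanism ε (x j)).map fun s => Function.update (0 : Fin d → ℝ) j (d * s)) := by
    intro j
    refine Integrable.smul_measure ?_ (by simp; omega)
    rw [integrable_map_measure (measurable_pi_apply i).aestronglyMeasurable
      (hFmeas j).aemeasurable]
    exact integrable_duchi _ _ _ (hgmeas j)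
  have hmapint : ∀ j : Fin d,
      ∫ y, y i ∂((d : ENNReal)⁻¹ •
        (duchiMechanism ε (x j)).map fun s => Function.update (0 : Fin d → ℝ) j (d * s))
      = (d : ℝ)⁻¹ *
          ∫ s, Function.update (0 : Fin d → ℝ) j ((d:ℝ) * s) i ∂(duchiMechanism ε (x j)) := by
    intro j
    rw [integral_smul_measure, integral_map (hFmeas j).aemeasurable
      (measurable_pi_apply i).aestronglyMeasurable, smul_eq_mul]
    congr 1
    simp
  rw [harmonyMechanism, Measure.sum_fintype,
    integral_finset_sum_measure (fun j _ => hint j)]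
  have hzero : ∀ j : Fin d, j ∈ Finset.univ → j ≠ i →
      ∫ y, y i ∂((d : ENNReal)⁻¹ •
        (duchiMechanism ε (x j)).map fun s => Function.update (0 : Fin d → ℝ) j (d * s)) = 0 := by
    intro j _ hj
    rw [hmapint j]
    have : ∀ s : ℝ, Function.update (0 : Fin d → ℝ) j ((d:ℝ) * s) i = 0 := fun s => by
      rw [Function.update_of_ne hj.symm]; rfl
    simp [this]
  rw [Finset.sum_eq_single i (fun j hj hji => hzero j hj hji) (by simp), hmapint i]
  have hupd : ∀ s : ℝ, Function.update (0 : Fin d → ℝ) i ((d:ℝ) * s) i = (d:ℝ) * s :=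
    fun s => Function.update_self i _ _
  simp only [hupd]
  rw [integral_duchi ε (x i) (hx i) hε _ (measurable_const_mul _)]
  have hd0 : (d:ℝ) ≠ 0 := Nat.cast_ne_zero.mpr (by omega)
  have he1 : Real.exp ε - 1 ≠ 0 := by linarith
  have he2 : 2 * Real.exp ε + 2 ≠ 0 := by nlinarith
  field_simp
  ring
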